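/- arXiv:2404.14166 — 2 statements merged into one kernel-verified Lean document; each statement's English description precedes it below -/
import Mathlib

section
/- For a set S of pointed matrices (S ⊆ matr_*), the following are equivalent: (i) every finitely complete pointed category has S-closed relations; (ii) the category of pointed sets has S-closed relations; (iii) for every matrix M ∈ S, either all entries of the right column of M equal ∗, or the right column of M equals one of its left columns. -/
open CategoryTheory CategoryTheory.Limits

universe w v u

/-- A pointed extended matrix `M ∈ matr_*(n,m,k)`: `n > 0` rows, `m` left
columns and one right column, with entries in `{∗, x₁, …, x_k}` (modelled as
`Option (Fin k)`, where `none` is `∗`). `matr_*` is the union over all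
`n,m,k`, i.e. the type `MatrStar`. -/
structure MatrStar where
  n : ℕ
  m : ℕ
  k : ℕ
  npos : 0 < n
  left : Fin n → Fin m → Option (Fin k)
  right : Fin n → Option (Fin k)

namespace MatrStar

variable {C : Type u} [Category.{v} C] [HasZeroMorphisms C]

/-- A relation `r : R ⟶ P` in a pointed category, where `pr` exhibits `P` as
the `n`-fold product `Xⁿ`, is `M`-closed: for every object `Z` and every
interpretation `f : {∗,x₁,…,x_k} → C(Z,X)` with `f ∗ = 0`, if for every left
column `j` the induced morphism `Z ⟶ Xⁿ` factors through `r`, then so does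
the morphism induced by the right column. -/
def IsClosed (M : MatrStar) {X P R : C} (pr : Fin M.n → (P ⟶ X))
    (hP : IsLimit (Fan.mk P pr)) (r : R ⟶ P) : Prop :=
  ∀ (Z : C) (f : Option (Fin M.k) → (Z ⟶ X)), f none = 0 →
    ((∀ j : Fin M.m, ∃ g : Z ⟶ R,
        g ≫ r = hP.lift (Fan.mk Z (fun i => f (M.left i j)))) →
    ∃ g : Z ⟶ R, g ≫ r = hP.lift (Fan.mk Z (fun i => f (M.right i))))

/-- A relation `r : R ⟶ P`, where `pr` exhibits `P` as the product
`X₁ × ⋯ × X_n` of a family `X : Fin n → C`, is strictly `M`-closed: for every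
object `Z` and every row-wise interpretation `fᵢ : {∗,x₁,…,x_k} → C(Z,Xᵢ)`
with `fᵢ ∗ = 0`, if every left column's induced morphism factors through `r`,
then so does the right column's induced morphism. -/
def IsStrictClosed (M : MatrStar) {X : Fin M.n → C} {P R : C}
    (pr : ∀ i, P ⟶ X i) (hP : IsLimit (Fan.mk P pr)) (r : R ⟶ P) : Prop :=
  ∀ (Z : C) (f : ∀ i, Option (Fin M.k) → (Z ⟶ X i)), (∀ i, f i none = 0) →
    ((∀ j : Fin M.m, ∃ g : Z ⟶ R,
        g ≫ r = hP.lift (Fan.mk Z (fun i => f i (M.left i j)))) →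
    ∃ g : Z ⟶ R, g ≫ r = hP.lift (Fan.mk Z (fun i => f i (M.right i))))

/-- `C` has `M`-closed `W`-relations: every `n`-ary relation `r : R ⟶ Xⁿ`
belonging to the class of monomorphisms `W` is `M`-closed. -/
def HasClosedRels (M : MatrStar) (C : Type u) [Category.{v} C]
    [HasZeroMorphisms C] (W : MorphismProperty C) : Prop :=
  ∀ (X P R : C) (pr : Fin M.n → (P ⟶ X)) (hP : IsLimit (Fan.mk P pr))
    (r : R ⟶ P), W r → M.IsClosed pr hP r

/-- `C` has `S`-closed `W`-relations. -/
def HasSClosedRels (S : Set MatrStar) (C : Type u) [Category.{v} C]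
    [HasZeroMorphisms C] (W : MorphismProperty C) : Prop :=
  ∀ M ∈ S, HasClosedRels M C W

end MatrStar

/-- The class of strong monomorphisms of `C`, as a `MorphismProperty`. -/
def strongMonos (C : Type u) [Category.{v} C] : MorphismProperty C :=
  fun _ _ f => StrongMono f

/-- The canonical zero-morphism structure on the category `Pointed` of
pointed sets: the zero morphism is the constant map at the base point. -/
instance : HasZeroMorphisms Pointed.{w} where
  zero X Y := ⟨⟨fun _ => Y.point, rfl⟩⟩
  comp_zero _ _ := Pointed.Hom.ext rfl
  zero_comp _ {_ _} f := Pointed.Hom.ext (funext fun _ => f.map_point)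

/-!
If the right column of `M` is all `∗`, the zero morphism factors through every relation; if it
repeats a left column, the factorisation of that column serves. Conversely, let `X` be the pointed
set `{∗, x₁, …, x_k}`, let `R ⊆ Xⁿ` consist of the tuples given by the `∗`-column and the left
columns of `M`, and interpret each variable `a` as the map from the two-point set `{∗, z}` sending
`z` to `a`. Every left column then factors through `R`, and evaluating the factorisation of the
right column at `z` shows that the right column itself lies in `R`.
-/

theorem CategoryTheory.Functor.map_fan_lift {C D : Type*} [Category C] [Category D]
    (F : C ⥤ D) {ι : Type*} {X : ι → C} {P Z : C} {pr : ∀ i, P ⟶ X i}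
    (hP : IsLimit (Fan.mk P pr)) (hP' : IsLimit (Fan.mk (F.obj P) fun i => F.map (pr i)))
    {g : ∀ i, Z ⟶ X i} {g' : ∀ i, F.obj Z ⟶ F.obj (X i)} (hg : ∀ i, F.map (g i) = g' i) :
    F.map (hP.lift (Fan.mk Z g)) = hP'.lift (Fan.mk (F.obj Z) g') :=
  Fan.IsLimit.hom_ext hP' _ _ fun i => by
    rw [fan_mk_proj, ← F.map_comp]
    exact (congrArg F.map (hP.fac _ ⟨i⟩)).trans ((hg i).trans (hP'.fac (Fan.mk _ g') ⟨i⟩).symm)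

namespace MatrStar

section Closedness

variable (M : MatrStar)

def IsStarOrLeftColumn (v : Fin M.n → Option (Fin M.k)) : Prop :=
  (∀ i, v i = none) ∨ ∃ j, ∀ i, v i = M.left i j

variable {C : Type u} [Category.{v} C] [HasZeroMorphisms C]

def IsClosedAt {X P R : C} (pr : Fin M.n → (P ⟶ X)) (hP : IsLimit (Fan.mk P pr))
    (r : R ⟶ P) (Z : C) : Prop :=
  ∀ f : Option (Fin M.k) → (Z ⟶ X), f none = 0 →
    ((∀ j : Fin M.m, ∃ g : Z ⟶ R,
        g ≫ r = hP.lift (Fan.mk Z (fun i => f (M.left i j)))) →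
    ∃ g : Z ⟶ R, g ≫ r = hP.lift (Fan.mk Z (fun i => f (M.right i))))

theorem isClosed_of_isStarOrLeftColumn (hM : M.IsStarOrLeftColumn M.right) {X P R : C}
    (pr : Fin M.n → (P ⟶ X)) (hP : IsLimit (Fan.mk P pr)) (r : R ⟶ P) :
    M.IsClosed pr hP r := by
  intro Z f hf hleft
  rcases hM with hstar | ⟨j, hj⟩
  · refine ⟨0, Fan.IsLimit.hom_ext hP _ _ fun i => ?_⟩
    rw [Fan.IsLimit.lift_proj]
    simp [hstar i, hf]
  · have hcol : (fun i => f (M.right i)) = fun i => f (M.left i j) :=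
      funext fun i => by rw [hj i]
    rw [hcol]
    exact hleft j

theorem hasSClosedRels_of_isStarOrLeftColumn {S : Set MatrStar}
    (hS : ∀ M ∈ S, M.IsStarOrLeftColumn M.right) (W : MorphismProperty C) :
    HasSClosedRels S C W :=
  fun M hM _ _ _ pr hP r _ => M.isClosed_of_isStarOrLeftColumn (hS M hM) pr hP r

variable {M} {D : Type*} [Category D] [HasZeroMorphisms D]

theorem IsClosedAt.map {F : C ⥤ D} (hF : F.FullyFaithful) [F.PreservesZeroMorphisms]
    {X P R Z : C} {pr : Fin M.n → (P ⟶ X)} {hP : IsLimit (Fan.mk P pr)} {r : R ⟶ P}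
    (h : M.IsClosedAt pr hP r Z) (hP' : IsLimit (Fan.mk (F.obj P) fun i => F.map (pr i))) :
    M.IsClosedAt (fun i => F.map (pr i)) hP' (F.map r) (F.obj Z) := by
  intro f hf hleft
  have hmap (a) : F.map (hF.preimage (f a)) = f a := hF.map_preimage _
  obtain ⟨g, hg⟩ := h (fun a => hF.preimage (f a)) (hF.map_injective (by simp [hf]))
    fun j => by
      obtain ⟨g, hg⟩ := hleft j
      refine ⟨hF.preimage g, hF.map_injective ?_⟩
      rw [F.map_comp, hF.map_preimage, hg, F.map_fan_lift hP hP' fun i => hmap _]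
  exact ⟨F.map g, by rw [← F.map_comp, hg, F.map_fan_lift hP hP' fun i => hmap _]⟩

end Closedness

end MatrStar

namespace Pointed

section Limits

variable {J : Type} [SmallCategory J] (K : J ⥤ Pointed.{v})

def limitCone : Cone K where
  pt := ⟨{x : ∀ j, K.obj j // ∀ {j j'} (f : j ⟶ j'), (K.map f).toFun (x j) = x j'},
    ⟨fun j => (K.obj j).point, fun f => (K.map f).map_point⟩⟩
  π :=
    { app := fun j => ⟨fun x => x.1 j, rfl⟩
      naturality := fun _ _ f => Pointed.Hom.ext (funext fun x => (x.2 f).symm) }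

def limitConeIsLimit : IsLimit (limitCone K) where
  lift s := ⟨fun z => ⟨fun j => (s.π.app j).toFun z, fun f => congrArg (·.toFun z) (s.w f)⟩,
    Subtype.ext (funext fun j => (s.π.app j).map_point)⟩
  uniq s m hm := Pointed.Hom.ext (funext fun z =>
    Subtype.ext (funext fun j => congrArg (·.toFun z) (hm j)))

instance : HasLimitsOfSize.{0, 0} Pointed.{v} :=
  ⟨fun _ _ => ⟨fun K => ⟨⟨⟨_, limitConeIsLimit K⟩⟩⟩⟩⟩

end Limits

theorem fan_lift_apply {ι : Type*} {X : ι → Pointed.{v}} {P Z : Pointed.{v}}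
    {pr : ∀ i, P ⟶ X i} (hP : IsLimit (Fan.mk P pr)) (g : ∀ i, Z ⟶ X i) (z : Z) (i : ι) :
    (pr i).toFun ((hP.lift (Fan.mk Z g)).toFun z) = (g i).toFun z :=
  congrArg (·.toFun z) (hP.fac (Fan.mk Z g) ⟨i⟩)

theorem mono_of_injective {X Y : Pointed.{v}} (f : X ⟶ Y) (hf : Function.Injective f.toFun) :
    Mono f :=
  ⟨fun _ _ h => Pointed.Hom.ext (funext fun z => hf (congrArg (·.toFun z) h))⟩

theorem exists_comp_eq_of_forall_mem_range {Z R P : Pointed.{v}} (r : R ⟶ P)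
    (hr : Function.Injective r.toFun) (l : Z ⟶ P) (hl : ∀ z, l.toFun z ∈ Set.range r.toFun) :
    ∃ g : Z ⟶ R, g ≫ r = l := by
  choose g hg using hl
  exact ⟨⟨g, hr (by rw [hg, l.map_point, r.map_point])⟩, Pointed.Hom.ext (funext hg)⟩

theorem isZero_of_subsingleton (X : Pointed.{v}) [Subsingleton X] : IsZero X :=
  ⟨fun Y => ⟨⟨⟨0⟩, fun f => Pointed.Hom.ext (funext fun x => by
      rw [Subsingleton.elim x X.point, f.map_point]; rfl)⟩⟩,
   fun Y => ⟨⟨⟨0⟩, fun _ => Pointed.Hom.ext (funext fun _ => Subsingleton.elim _ _)⟩⟩⟩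

end Pointed

namespace MatrStar

section Counterexample

variable (M : MatrStar) {X P : Pointed.{v}} (e : Option (Fin M.k) → X)
  (pr : Fin M.n → (P ⟶ X))

def starOrLeftTuples : Set P :=
  {p | ∃ v, M.IsStarOrLeftColumn v ∧ ∀ i, (pr i).toFun p = e (v i)}

def starOrLeftRel (he_none : e none = X.point) : Pointed.{v} :=
  Pointed.of (⟨P.point, fun _ => none, Or.inl fun _ => rfl,
    fun i => (pr i).map_point.trans he_none.symm⟩ : M.starOrLeftTuples e pr)

def starOrLeftRel.ι (he_none : e none = X.point) : M.starOrLeftRel e pr he_none ⟶ P :=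
  ⟨Subtype.val, rfl⟩

theorem starOrLeftRel.ι_injective (he_none : e none = X.point) :
    Function.Injective (starOrLeftRel.ι M e pr he_none).toFun :=
  Subtype.val_injective

theorem starOrLeftRel.range_ι (he_none : e none = X.point) :
    Set.range (starOrLeftRel.ι M e pr he_none).toFun = M.starOrLeftTuples e pr :=
  Subtype.range_coe

instance [Countable P] (he_none : e none = X.point) :
    Countable (M.starOrLeftRel e pr he_none) :=
  Subtype.countable

variable {M e pr}

theorem isStarOrLeftColumn_right_of_isClosedAt {R Z : Pointed.{v}} (he : Function.Injective e)
    (he_none : e none = X.point) (hP : IsLimit (Fan.mk P pr)) {r : R ⟶ P}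
    (hr : Function.Injective r.toFun) (hrange : Set.range r.toFun = M.starOrLeftTuples e pr)
    {z : Z} (hz : z ≠ Z.point) (h : M.IsClosedAt pr hP r Z) :
    M.IsStarOrLeftColumn M.right := by
  classical
  let f (a : Option (Fin M.k)) : Z ⟶ X :=
    ⟨fun w => e (if w = z then a else none), by simp [hz.symm, he_none]⟩
  have hf_none : f none = 0 := Pointed.Hom.ext (funext fun w => by simp [f, he_none]; rfl)
  have hlift (v : Fin M.n → Option (Fin M.k)) (w : Z) (i : Fin M.n) :
      (pr i).toFun ((hP.lift (Fan.mk Z fun i => f (v i))).toFun w) =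
        e (if w = z then v i else none) :=
    Pointed.fan_lift_apply hP _ w i
  have hleft (j : Fin M.m) :
      ∃ g : Z ⟶ R, g ≫ r = hP.lift (Fan.mk Z fun i => f (M.left i j)) := by
    refine Pointed.exists_comp_eq_of_forall_mem_range r hr _ fun w => ?_
    rw [hrange]
    refine ⟨fun i => if w = z then M.left i j else none, ?_, hlift _ w⟩
    by_cases hw : w = z
    · exact Or.inr ⟨j, fun i => if_pos hw⟩
    · exact Or.inl fun i => if_neg hw
  obtain ⟨g, hg⟩ := h f hf_none hleft
  have hmem : (hP.lift (Fan.mk Z fun i => f (M.right i))).toFun z ∈ Set.range r.toFun :=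
    ⟨g.toFun z, congrArg (·.toFun z) hg⟩
  rw [hrange] at hmem
  obtain ⟨v, hv, hpr⟩ := hmem
  have hv_right : v = M.right :=
    funext fun i => he (by simpa using (hpr i).symm.trans (hlift _ z i))
  exact hv_right ▸ hv

end Counterexample

theorem isStarOrLeftColumn_right_of_hasClosedRels_pointed (M : MatrStar)
    (h : M.HasClosedRels Pointed.{w} (MorphismProperty.monomorphisms Pointed.{w})) :
    M.IsStarOrLeftColumn M.right := by
  let X : Pointed.{w} := Pointed.of (ULift.up.{w} (none : Option (Fin M.k)))
  let pr : Fin M.n → ((∏ᶜ fun _ : Fin M.n => X) ⟶ X) := Pi.π _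
  have hr := starOrLeftRel.ι_injective M ULift.up pr rfl
  refine isStarOrLeftColumn_right_of_isClosedAt ULift.up_injective rfl (productIsProduct _) hr
    (starOrLeftRel.range_ι M _ _ _) (Z := Pointed.of (ULift.up.{w} false)) (z := ULift.up true)
    (by simp [Pointed.of]) ?_
  exact h _ _ _ pr (productIsProduct _) _ (Pointed.mono_of_injective _ hr) _

end MatrStar

/-! Condition (i) only concerns categories with objects in `Type u` and morphisms in `Type v`,
which `Pointed` is not. Countable pointed sets, coded as pointed subsets of `ℕ`, form a small
category, fully embedded in `Pointed.{v}`, that is closed under finite limits and still contains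
the counterexample; `ULift` puts its objects in `Type u`. -/

structure PointedNatSubset where
  carrier : Set ℕ
  point : carrier

def PointedNatSubset.toPointed.{u₁, v₁} (A : ULift.{u₁} PointedNatSubset) : Pointed.{v₁} :=
  Pointed.of (ULift.up.{v₁} A.down.point)

abbrev SmallPointed.{u₁, v₁} : Type u₁ :=
  InducedCategory Pointed.{v₁} PointedNatSubset.toPointed.{u₁, v₁}

namespace SmallPointed

abbrev toPointed.{u₁, v₁} : SmallPointed.{u₁, v₁} ⥤ Pointed.{v₁} := inducedFunctor _

instance (A : SmallPointed.{u, v}) : Countable (toPointed.obj A) :=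
  inferInstanceAs (Countable (ULift _))

noncomputable def of (A : Pointed) [Countable A] : SmallPointed.{u, v} :=
  letI := Encodable.ofCountable A
  ⟨⟨Set.range Encodable.encode, ⟨_, A.point, rfl⟩⟩⟩

noncomputable def equivOf (A : Pointed) [Countable A] :
    A ≃ toPointed.obj (of A : SmallPointed.{u, v}) :=
  letI := Encodable.ofCountable A
  (Equiv.ofInjective _ Encodable.encode_injective).trans Equiv.ulift.symm

theorem equivOf_point (A : Pointed) [Countable A] :
    equivOf A A.point = (toPointed.obj (of A : SmallPointed.{u, v})).point :=
  rfl

noncomputable def isoOf (A : Pointed.{v}) [Countable A] :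
    toPointed.obj (of A : SmallPointed.{u, v}) ≅ A :=
  Pointed.Iso.mk (equivOf A).symm ((Equiv.symm_apply_eq _).2 (equivOf_point _).symm)

noncomputable instance : CreatesFiniteLimits toPointed.{u, v} where
  createsFiniteLimits J _ _ := ⟨fun {K} =>
    haveI (j : J) : Countable ((K ⋙ toPointed).obj j) :=
      inferInstanceAs (Countable (toPointed.obj _))
    haveI : Countable (Pointed.limitCone (K ⋙ toPointed)).pt :=
      inferInstanceAs (Countable (Subtype _))
    createsLimitOfFullyFaithfulOfIso' (Pointed.limitConeIsLimit _) _ (isoOf _)⟩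

instance : HasFiniteLimits SmallPointed.{u, v} :=
  hasFiniteLimits_of_hasLimitsLimits_of_createsFiniteLimits toPointed

instance : HasZeroMorphisms SmallPointed.{u, v} :=
  (fullyFaithfulInducedFunctor _).hasZeroMorphisms

instance : toPointed.{u, v}.PreservesZeroMorphisms :=
  ⟨fun _ _ => (fullyFaithfulInducedFunctor _).map_preimage 0⟩

instance : HasZeroObject SmallPointed.{u, v} :=
  ⟨⟨_, IsZero.of_full_of_faithful_of_isZero toPointed _
    ((Pointed.isZero_of_subsingleton (Pointed.of PUnit.unit)).of_iso (isoOf _))⟩⟩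

end SmallPointed

open SmallPointed in
theorem MatrStar.isStarOrLeftColumn_right_of_hasClosedRels_smallPointed (M : MatrStar)
    (h : M.HasClosedRels SmallPointed.{u, v} (MorphismProperty.monomorphisms _)) :
    M.IsStarOrLeftColumn M.right := by
  let X : SmallPointed.{u, v} := of ⟨Option (Fin M.k), none⟩
  obtain ⟨e, he_none⟩ :
      ∃ e : Option (Fin M.k) ≃ toPointed.obj X, e none = (toPointed.obj X).point :=
    ⟨equivOf ⟨Option (Fin M.k), none⟩, equivOf_point _⟩
  let P : SmallPointed.{u, v} := ∏ᶜ fun _ : Fin M.n => X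
  let pr : Fin M.n → (P ⟶ X) := Pi.π _
  let hP' : IsLimit (Fan.mk (toPointed.obj P) fun i => toPointed.map (pr i)) :=
    isLimitFanMkObjOfIsLimit toPointed _ _ (productIsProduct _)
  let r : of (M.starOrLeftRel e (fun i => toPointed.map (pr i)) he_none) ⟶ P :=
    InducedCategory.homMk ((isoOf _).hom ≫ starOrLeftRel.ι M _ _ _)
  have hr : Function.Injective (toPointed.map r).toFun :=
    (starOrLeftRel.ι_injective M _ _ _).comp (equivOf _).symm.injective
  have hrange : Set.range (toPointed.map r).toFun = M.starOrLeftTuples e _ :=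
    ((equivOf _).symm.surjective.range_comp _).trans (starOrLeftRel.range_ι M _ _ _)
  have hclosed : M.IsClosedAt pr (productIsProduct _) r (of ⟨Bool, false⟩) :=
    h _ _ _ pr _ r (toPointed.{u, v}.mono_of_mono_map (Pointed.mono_of_injective _ hr)) _
  exact isStarOrLeftColumn_right_of_isClosedAt e.injective he_none hP' hr hrange
    (z := equivOf _ true) (fun h => Bool.noConfusion ((equivOf _).injective h))
    (hclosed.map (fullyFaithfulInducedFunctor _) hP')

/-- For a set `S` of pointed matrices, the following are
equivalent: (i) every finitely complete pointed category has `S`-closed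
relations; (ii) the category of pointed sets has `S`-closed relations;
(iii) for every `M ∈ S`, all entries of the right column of `M` are `∗`
(i.e. `none`), or the right column equals one of the left columns. -/
theorem pointed_antiTrivial_characterization (S : Set MatrStar) :
    ((∀ (C : Type u) [Category.{v} C] [HasFiniteLimits C] [HasZeroObject C]
        [HasZeroMorphisms C],
        MatrStar.HasSClosedRels S C (MorphismProperty.monomorphisms C)) ↔
      MatrStar.HasSClosedRels S Pointed.{w}
        (MorphismProperty.monomorphisms Pointed.{w})) ∧
    ((∀ (C : Type u) [Category.{v} C] [HasFiniteLimits C] [HasZeroObject C]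
        [HasZeroMorphisms C],
        MatrStar.HasSClosedRels S C (MorphismProperty.monomorphisms C)) ↔
      ∀ M ∈ S, (∀ i, M.right i = none) ∨
        ∃ j : Fin M.m, ∀ i, M.right i = M.left i j) := by
  have all_iff : (∀ (C : Type u) [Category.{v} C] [HasFiniteLimits C] [HasZeroObject C]
      [HasZeroMorphisms C], MatrStar.HasSClosedRels S C (MorphismProperty.monomorphisms C)) ↔
      ∀ M ∈ S, M.IsStarOrLeftColumn M.right :=
    ⟨fun h M hM => M.isStarOrLeftColumn_right_of_hasClosedRels_smallPointed (h _ M hM),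
      fun h _ _ _ _ _ => MatrStar.hasSClosedRels_of_isStarOrLeftColumn h _⟩
  have pointed_iff : MatrStar.HasSClosedRels S Pointed.{w}
      (MorphismProperty.monomorphisms Pointed.{w}) ↔ ∀ M ∈ S, M.IsStarOrLeftColumn M.right :=
    ⟨fun h M hM => M.isStarOrLeftColumn_right_of_hasClosedRels_pointed (h M hM),
      fun h => MatrStar.hasSClosedRels_of_isStarOrLeftColumn h _⟩
  exact ⟨all_iff.trans pointed_iff.symm, all_iff⟩
end

section
/- For a set S of non-pointed matrices (S ⊆ matr), the following are equivalent: (i) every finitely complete category has S-closed relations; (ii) the category of sets has S-closed relations; (iii) for every matrix M ∈ S, the right column of M equals one of its left columns. -/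
open CategoryTheory CategoryTheory.Limits

universe w v u

/-- A (non-pointed) extended matrix `M ∈ matr(n,m,k)`: `n > 0` rows, `m` left
columns and one right column, with entries in `{x₁, …, x_k}` (modelled as
`Fin k`). `matr` is the union over all `n,m,k`, i.e. the type `Matr`. -/
structure Matr where
  n : ℕ
  m : ℕ
  k : ℕ
  npos : 0 < n
  left : Fin n → Fin m → Fin k
  right : Fin n → Fin k

namespace Matr

variable {C : Type u} [Category.{v} C]

/-- A relation `r : R ⟶ P`, where `pr` exhibits `P` as the `n`-fold product
`Xⁿ`, is `M`-closed: for every object `Z` and every interpretation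
`f : {x₁,…,x_k} → C(Z,X)` of the entries of `M`, if for every left column `j`
the induced morphism `Z ⟶ Xⁿ` factors through `r`, then so does the morphism
induced by the right column. -/
def IsClosed (M : Matr) {X P R : C} (pr : Fin M.n → (P ⟶ X))
    (hP : IsLimit (Fan.mk P pr)) (r : R ⟶ P) : Prop :=
  ∀ (Z : C) (f : Fin M.k → (Z ⟶ X)),
    (∀ j : Fin M.m, ∃ g : Z ⟶ R,
        g ≫ r = hP.lift (Fan.mk Z (fun i => f (M.left i j)))) →
    ∃ g : Z ⟶ R, g ≫ r = hP.lift (Fan.mk Z (fun i => f (M.right i)))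

/-- A relation `r : R ⟶ P`, where `pr` exhibits `P` as the product
`X₁ × ⋯ × X_n` of a family `X : Fin n → C`, is strictly `M`-closed: for every
object `Z` and every row-wise interpretation `fᵢ : {x₁,…,x_k} → C(Z,Xᵢ)`, if
every left column's induced morphism `Z ⟶ X₁ × ⋯ × X_n` factors through `r`,
then so does the right column's induced morphism. -/
def IsStrictClosed (M : Matr) {X : Fin M.n → C} {P R : C}
    (pr : ∀ i, P ⟶ X i) (hP : IsLimit (Fan.mk P pr)) (r : R ⟶ P) : Prop :=
  ∀ (Z : C) (f : ∀ i, Fin M.k → (Z ⟶ X i)),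
    (∀ j : Fin M.m, ∃ g : Z ⟶ R,
        g ≫ r = hP.lift (Fan.mk Z (fun i => f i (M.left i j)))) →
    ∃ g : Z ⟶ R, g ≫ r = hP.lift (Fan.mk Z (fun i => f i (M.right i)))

/-- `C` has `M`-closed `W`-relations: every `n`-ary relation `r : R ⟶ Xⁿ`
belonging to the class of monomorphisms `W` is `M`-closed. -/
def HasClosedRels (M : Matr) (C : Type u) [Category.{v} C]
    (W : MorphismProperty C) : Prop :=
  ∀ (X P R : C) (pr : Fin M.n → (P ⟶ X)) (hP : IsLimit (Fan.mk P pr))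
    (r : R ⟶ P), W r → M.IsClosed pr hP r

/-- `C` has `S`-closed `W`-relations. -/
def HasSClosedRels (S : Set Matr) (C : Type u) [Category.{v} C]
    (W : MorphismProperty C) : Prop :=
  ∀ M ∈ S, HasClosedRels M C W

end Matr

/-! If the right column of `M` is its `j`-th left column, the morphism it induces is literally
the one induced by that left column, so every relation is `M`-closed. Conversely, `M`-closedness
passes to full subcategories closed under finite products, and the finite sets sit fully inside
`Type w` and have a finitely complete copy in any universes; there, the relation formed by the
left columns of `M` is not `M`-closed unless the right column is among them. -/

theorem CategoryTheory.Functor.map_lift_fanMk {C D : Type*} [Category C] [Category D]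
    (F : C ⥤ D) {ι : Type*} {X P Z : C} {pr : ι → (P ⟶ X)} (hP : IsLimit (Fan.mk P pr))
    (hFP : IsLimit (Fan.mk (F.obj P) fun i => F.map (pr i))) (fs : ι → (Z ⟶ X)) :
    F.map (hP.lift (Fan.mk Z fs)) = hFP.lift (Fan.mk (F.obj Z) fun i => F.map (fs i)) :=
  Fan.IsLimit.hom_ext hFP _ _ fun i => by
    rw [fan_mk_proj, ← F.map_comp]
    exact (congrArg F.map (hP.fac _ ⟨i⟩)).trans
      (hFP.fac (Fan.mk (F.obj Z) fun i => F.map (fs i)) ⟨i⟩).symm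

theorem CategoryTheory.Equivalence.hasFiniteLimits {C D : Type*} [Category C] [Category D]
    (e : C ≌ D) [HasFiniteLimits C] : HasFiniteLimits D :=
  ⟨fun _ _ _ => Adjunction.hasLimitsOfShape_of_equivalence e.inverse⟩

namespace Matr

variable {M : Matr} {S : Set Matr}

theorem isClosed_of_right_eq_left {C : Type u} [Category.{v} C]
    (h : ∃ j : Fin M.m, ∀ i, M.right i = M.left i j)
    {X P R : C} (pr : Fin M.n → (P ⟶ X)) (hP : IsLimit (Fan.mk P pr)) (r : R ⟶ P) :
    M.IsClosed pr hP r := by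
  obtain ⟨j, hj⟩ := h
  intro Z f hf
  rw [show M.right = fun i => M.left i j from funext hj]
  exact hf j

theorem hasSClosedRels_of_forall_right_eq_left
    (h : ∀ M ∈ S, ∃ j : Fin M.m, ∀ i, M.right i = M.left i j)
    (C : Type u) [Category.{v} C] (W : MorphismProperty C) : HasSClosedRels S C W :=
  fun M hM _ _ _ pr hP r _ => isClosed_of_right_eq_left (h M hM) pr hP r

theorem HasClosedRels.of_fullyFaithful {C D : Type*} [Category C] [Category D]
    (F : C ⥤ D) [F.Full] [F.Faithful] [PreservesLimitsOfShape (Discrete (Fin M.n)) F]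
    [F.PreservesMonomorphisms]
    (h : M.HasClosedRels D (MorphismProperty.monomorphisms D)) :
    M.HasClosedRels C (MorphismProperty.monomorphisms C) := by
  intro X P R pr hP r (hr : Mono r) Z f hf
  let hFP := isLimitFanMkObjOfIsLimit F (fun _ => X) pr hP
  obtain ⟨g, hg⟩ := h _ _ _ _ hFP (F.map r) (F.map_mono r) (F.obj Z) (fun c => F.map (f c))
    fun j => by
      obtain ⟨g, hg⟩ := hf j
      exact ⟨F.map g, by rw [← F.map_comp, hg, F.map_lift_fanMk hP hFP]⟩
  refine ⟨F.preimage g, F.map_injective ?_⟩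
  rw [F.map_comp, F.map_preimage, hg, F.map_lift_fanMk hP hFP]

/-- The witness is the relation on `(Fin k)ⁿ` consisting of the left columns of `M`, tested on
the one-point set with `x_c` interpreted as the constant `c`. -/
theorem exists_right_eq_left_of_hasClosedRels_fintypeCat
    (h : M.HasClosedRels FintypeCat.{w} (MorphismProperty.monomorphisms _)) :
    ∃ j : Fin M.m, ∀ i, M.right i = M.left i j := by
  let X := FintypeCat.of (ULift.{w} (Fin M.k))
  let P := FintypeCat.of (Fin M.n → X)
  let pr : Fin M.n → (P ⟶ X) := fun i => FintypeCat.homMk fun p => p i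
  let hP : IsLimit (Fan.mk P pr) :=
    Fan.IsLimit.mk _ (fun s => FintypeCat.homMk fun z i => s.proj i z) (fun _ _ => rfl)
      fun _ _ hg => FintypeCat.hom_ext _ _ fun z => funext fun i =>
        ConcreteCategory.congr_hom (hg i) z
  let col : Fin M.m → P := fun j i => ULift.up (M.left i j)
  let R := FintypeCat.of (Set.range col)
  let r : R ⟶ P := FintypeCat.homMk Subtype.val
  have hr : Mono r := ConcreteCategory.mono_of_injective r Subtype.val_injective
  obtain ⟨g, hg⟩ := h X P R pr hP r hr (FintypeCat.of PUnit)
    (fun c => FintypeCat.homMk fun _ => ULift.up c)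
    fun j => ⟨FintypeCat.homMk fun _ => ⟨col j, j, rfl⟩, rfl⟩
  have hright : ((g PUnit.unit : R) : P) = fun i => ULift.up (M.right i) :=
    (ConcreteCategory.congr_hom hg PUnit.unit :)
  obtain ⟨j, hj⟩ := (g PUnit.unit).2
  exact ⟨j, fun i => congrArg ULift.down (congrFun (hj.trans hright) i).symm⟩

theorem forall_right_eq_left_of_hasSClosedRels_type
    (h : HasSClosedRels S (Type w) (MorphismProperty.monomorphisms _)) :
    ∀ M ∈ S, ∃ j : Fin M.m, ∀ i, M.right i = M.left i j :=
  fun M hM => exists_right_eq_left_of_hasClosedRels_fintypeCat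
    ((h M hM).of_fullyFaithful FintypeCat.incl)

/-- `ULiftHom (ULift FintypeCat.Skeleton)` is a copy of the finite sets in the universes `u, v`. -/
theorem forall_right_eq_left_of_forall_hasSClosedRels
    (h : ∀ (C : Type u) [Category.{v} C] [HasFiniteLimits C],
      HasSClosedRels S C (MorphismProperty.monomorphisms C)) :
    ∀ M ∈ S, ∃ j : Fin M.m, ∀ i, M.right i = M.left i j := by
  let e := FintypeCat.Skeleton.equivalence.{0}.symm.trans (ULiftHomULiftCategory.equiv.{v, u} _)
  have := e.hasFiniteLimits
  exact fun M hM => exists_right_eq_left_of_hasClosedRels_fintypeCat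
    ((h _ M hM).of_fullyFaithful e.functor)

end Matr

/-- For a set `S` of non-pointed matrices, the following are
equivalent: (i) every finitely complete category has `S`-closed relations;
(ii) the category of sets has `S`-closed relations; (iii) for every `M ∈ S`,
the right column of `M` equals one of its left columns. -/
theorem antiTrivial_characterization (S : Set Matr) :
    ((∀ (C : Type u) [Category.{v} C] [HasFiniteLimits C],
        Matr.HasSClosedRels S C (MorphismProperty.monomorphisms C)) ↔
      Matr.HasSClosedRels S (Type w)
        (MorphismProperty.monomorphisms (Type w))) ∧
    ((∀ (C : Type u) [Category.{v} C] [HasFiniteLimits C],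
        Matr.HasSClosedRels S C (MorphismProperty.monomorphisms C)) ↔
      ∀ M ∈ S, ∃ j : Fin M.m, ∀ i, M.right i = M.left i j) := by
  have iii_of_i := Matr.forall_right_eq_left_of_forall_hasSClosedRels (S := S)
  have iii_of_ii := Matr.forall_right_eq_left_of_hasSClosedRels_type (S := S)
  refine ⟨⟨fun h => ?_, fun h C _ _ => ?_⟩, ⟨iii_of_i, fun h C _ _ => ?_⟩⟩
  · exact Matr.hasSClosedRels_of_forall_right_eq_left (iii_of_i h) _ _
  · exact Matr.hasSClosedRels_of_forall_right_eq_left (iii_of_ii h) C _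
  · exact Matr.hasSClosedRels_of_forall_right_eq_left h C _
end
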